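/- Let G act locally 2-transitively on T and let F have characteristic not dividing the Steinitz order of the closure of G. For vertices v ∈ L_n, w ∈ L_m with n < m, and nontrivial irreducible constituents π of F[D(v)]⁰ and σ of F[D(w)]⁰, the induced representations Ind_{St_G(v)}^G(π) and Ind_{St_G(w)}^G(σ) are not isomorphic. -/

import Mathlib

/-!
Spherical transitivity identifies the level `L_n` with `St(v)\G`, so `Ind π` has dimension
`|L_n| dim π`. A nonzero submodule of `F[D(v)]⁰` has dimension at most `|D(v)| - 1 = m_{n+1} - 1`,
hence `|L_n| dim π < |L_n| m_{n+1} = |L_{n+1}| ≤ |L_m| ≤ |L_m| dim σ`: the two induced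
representations already have different dimensions.
-/

/-- Vertices of level `n` of the spherically symmetric rooted tree on `(X i)`. -/
abbrev Vert (X : ℕ → Type) (n : ℕ) := ∀ i : Fin n, X i.val

/-- The predecessor (parent) of a vertex of level `n+1`. -/
def pred {X : ℕ → Type} {n : ℕ} (v : Vert X (n + 1)) : Vert X n :=
  fun i => v i.castSucc

/-- A (root-preserving) action of `G` on the tree: compatible actions on all levels. -/
structure TreeAction (X : ℕ → Type) (G : Type) [Group G] where
  ρ : ∀ n : ℕ, G →* Equiv.Perm (Vert X n)
  compat : ∀ (n : ℕ) (g : G) (v : Vert X (n + 1)), pred (ρ (n + 1) g v) = ρ n g (pred v)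

variable {X : ℕ → Type} {G : Type} [Group G]

/-- Spherically transitive action. -/
def SphTrans (A : TreeAction X G) : Prop := ∀ (n : ℕ) (u v : Vert X n), ∃ g : G, A.ρ n g u = v

/-- Locally 2-transitive action. -/
def LocTwoTrans (A : TreeAction X G) : Prop :=
  SphTrans A ∧ ∀ (n : ℕ) (u v : Vert X n), u ≠ v →
    ∀ u₁ u₂ v₁ v₂ : Vert X (n + 1), pred u₁ = u → pred u₂ = u → pred v₁ = v → pred v₂ = v →
      ∃ g : G, A.ρ n g u = u ∧ A.ρ n g v = v ∧ A.ρ (n + 1) g u₁ = u₂ ∧ A.ρ (n + 1) g v₁ = v₂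

variable [∀ i, DecidableEq (X i)]

/-- Length of the longest common prefix of two vertices of level `n`. -/
def cpl {n : ℕ} (u v : Vert X n) : ℕ :=
  Nat.findGreatest (fun k => ∀ i : Fin n, (i : ℕ) < k → u i = v i) n

/-- The shortest-path distance between two vertices of level `n`. -/
def tdist {n : ℕ} (u v : Vert X n) : ℕ := 2 * (n - cpl u v)

/-- The space of equivariant linear maps between two representations. -/
def repHom {F : Type} [Field F] {G : Type} [Monoid G] {V W : Type}
    [AddCommGroup V] [Module F V] [AddCommGroup W] [Module F W]
    (ρV : Representation F G V) (ρW : Representation F G W) :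
    Submodule F (V →ₗ[F] W) where
  carrier := {φ | ∀ g : G, φ ∘ₗ ρV g = ρW g ∘ₗ φ}
  add_mem' := by
    intro a b ha hb g
    rw [LinearMap.add_comp, LinearMap.comp_add, ha g, hb g]
  zero_mem' := by
    intro g
    simp
  smul_mem' := by
    intro c φ hφ g
    rw [LinearMap.smul_comp, LinearMap.comp_smul, hφ g]

/-- A representation is irreducible if it is nonzero and has no proper nonzero
invariant subspace. -/
def Representation.IsIrred {F : Type} [Field F] {G : Type} [Monoid G] {V : Type}
    [AddCommGroup V] [Module F V] (ρ : Representation F G V) : Prop :=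
  Nontrivial V ∧ ∀ W : Submodule F V, (∀ g : G, ∀ x ∈ W, ρ g x ∈ W) → W = ⊥ ∨ W = ⊤

/-- A representation is trivial if the group acts identically. -/
def Representation.IsTriv {F : Type} [Field F] {G : Type} [Monoid G] {V : Type}
    [AddCommGroup V] [Module F V] (ρ : Representation F G V) : Prop :=
  ∀ (g : G) (x : V), ρ g x = x

/-- `π` occurs in `ρ`, i.e. `π` is isomorphic to a subrepresentation of `ρ`. -/
def Representation.OccursIn {F : Type} [Field F] {G : Type} [Monoid G] {V W : Type}
    [AddCommGroup V] [Module F V] [AddCommGroup W] [Module F W]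
    (π : Representation F G V) (ρ : Representation F G W) : Prop :=
  ∃ j : V →ₗ[F] W, Function.Injective j ∧ ∀ (g : G) (x : V), j (π g x) = ρ g (j x)

/-- The carrier of the representation induced from a representation `π` of a
subgroup `S ≤ G`: the functions `f : G → V` with `f (s * x) = π s (f x)`. -/
def IndCarrier {F : Type} [Field F] {G : Type} [Group G] (S : Subgroup G) {V : Type}
    [AddCommGroup V] [Module F V] (π : Representation F S V) :
    Submodule F (G → V) where
  carrier := {f | ∀ (s : S) (x : G), f (↑s * x) = π s (f x)}
  add_mem' := by
    intro a b ha hb s x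
    simp only [Pi.add_apply, ha s x, hb s x, map_add]
  zero_mem' := by
    intro s x
    simp
  smul_mem' := by
    intro c f hf s x
    simp only [Pi.smul_apply, hf s x, map_smul]

/-- The representation of `G` induced from a representation `π` of a subgroup
`S ≤ G`, by right translation on functions. -/
def IndRep {F : Type} [Field F] {G : Type} [Group G] (S : Subgroup G) {V : Type}
    [AddCommGroup V] [Module F V] (π : Representation F S V) :
    Representation F G (IndCarrier S π) where
  toFun h :=
    { toFun := fun f => ⟨fun x => (f : G → V) (x * h), by
        intro s x
        have := f.2 s (x * h)
        simpa [mul_assoc] using this⟩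
      map_add' := fun f g => rfl
      map_smul' := fun c f => rfl }
  map_one' := by
    apply LinearMap.ext
    intro f
    apply Subtype.ext
    funext x
    simp
  map_mul' := by
    intro a b
    apply LinearMap.ext
    intro f
    apply Subtype.ext
    funext x
    simp [mul_assoc]

/-- The stabiliser of the vertex `v` in `G`. -/
def stab {X : ℕ → Type} {G : Type} [Group G] (A : TreeAction X G) {n : ℕ}
    (v : Vert X n) : Subgroup G where
  carrier := {g | A.ρ n g v = v}
  one_mem' := by simp
  mul_mem' := by
    intro a b ha hb
    simp only [Set.mem_setOf_eq, map_mul, Equiv.Perm.mul_apply] at *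
    rw [hb, ha]
  inv_mem' := by
    intro a ha
    simp only [Set.mem_setOf_eq, map_inv] at *
    exact (Equiv.symm_apply_eq _).mpr ha.symm

/-- The set of descendants of the vertex `v`. -/
def Desc (X : ℕ → Type) {n : ℕ} (v : Vert X n) : Type :=
  {w : Vert X (n + 1) // pred w = v}

/-- The stabiliser of `v` permutes the descendants of `v`. -/
def descPermHom {X : ℕ → Type} {G : Type} [Group G] (A : TreeAction X G) {n : ℕ}
    (v : Vert X n) : stab A v →* Equiv.Perm (Desc X v) where
  toFun g :=
    { toFun := fun w => ⟨A.ρ (n + 1) g.1 w.1, by rw [A.compat, w.2]; exact g.2⟩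
      invFun := fun w => ⟨A.ρ (n + 1) g.1⁻¹ w.1, by
        rw [A.compat, w.2]
        exact (stab A v).inv_mem g.2⟩
      left_inv := fun w => Subtype.ext (by
        simp [← Equiv.Perm.mul_apply, ← map_mul])
      right_inv := fun w => Subtype.ext (by
        show A.ρ (n + 1) g.1 (A.ρ (n + 1) g.1⁻¹ w.1) = w.1
        rw [← Equiv.Perm.mul_apply, ← map_mul, mul_inv_cancel, map_one, Equiv.Perm.one_apply]) }
  map_one' := by
    ext w
    simp [Equiv.Perm.one_apply]
    rfl
  map_mul' := by
    intro a b
    ext w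
    simp [Equiv.Perm.mul_apply]
    rfl

/-- The old `Representation.ofMulAction`, on `H →₀ k` via `Finsupp.lmapDomain`. -/
noncomputable def ofMulActionFinsupp (k G H : Type) [Field k] [Monoid G] [MulAction G H] :
    Representation k G (H →₀ k) where
  toFun g := Finsupp.lmapDomain k k (g • ·)
  map_one' := by
    show Finsupp.lmapDomain k k (fun x : H => (1 : G) • x) = LinearMap.id
    simp only [one_smul]
    exact Finsupp.lmapDomain_id k k
  map_mul' := fun g h => by
    show Finsupp.lmapDomain k k (fun x : H => (g * h) • x) =
      (Finsupp.lmapDomain k k (g • ·)) ∘ₗ (Finsupp.lmapDomain k k (h • ·))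
    simp only [mul_smul]
    exact Finsupp.lmapDomain_comp k k (h • ·) (g • ·)

/-- The permutation representation of the stabiliser of `v` on `F[D(v)]`. -/
noncomputable def descRep (F : Type) [Field F] {X : ℕ → Type} {G : Type} [Group G]
    (A : TreeAction X G) {n : ℕ} (v : Vert X n) :
    Representation F (stab A v) (Desc X v →₀ F) :=
  letI : MulAction (stab A v) (Desc X v) := MulAction.compHom _ (descPermHom A v)
  ofMulActionFinsupp F (stab A v) (Desc X v)

/-- The permutation representation of `G` on `F[L_n]`. -/
noncomputable def levelRep (F : Type) [Field F] {X : ℕ → Type} {G : Type} [Group G]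
    (A : TreeAction X G) (n : ℕ) : Representation F G (Vert X n →₀ F) :=
  letI : MulAction G (Vert X n) := MulAction.compHom _ (A.ρ n)
  ofMulActionFinsupp F G (Vert X n)

/-- The subspace of `F[α]` of formal sums whose coefficients sum to zero. -/
noncomputable def zeroSum (F : Type) [Field F] (α : Type) : Submodule F (α →₀ F) :=
  LinearMap.ker (Finsupp.linearCombination F (fun _ : α => (1 : F)))

/-- `π` occurs in the zero-coefficient-sum part `F[D(v)]⁰` of the permutation
module `F[D(v)]`. -/
def OccursInZero {X : ℕ → Type} {G : Type} [Group G] (A : TreeAction X G)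
    (F : Type) [Field F] {n : ℕ} {v : Vert X n} {V : Type} [AddCommGroup V]
    [Module F V] (π : Representation F (stab A v) V) : Prop :=
  ∃ j : V →ₗ[F] (Desc X v →₀ F), Function.Injective j ∧
    (∀ (g : stab A v) (x : V), j (π g x) = descRep F A v g (j x)) ∧
    ∀ x : V, j x ∈ zeroSum F (Desc X v)

section ZeroSum

variable {F : Type} [Field F]

lemma finrank_zeroSum (α : Type) [Fintype α] [Nonempty α] :
    Module.finrank F (zeroSum F α) + 1 = Fintype.card α := by
  set L := Finsupp.linearCombination F (fun _ : α => (1 : F))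
  have hsurj : Function.Surjective L := fun r =>
    ⟨Finsupp.single (Classical.arbitrary α) r, by simp [L]⟩
  have hrank := L.finrank_range_add_finrank_ker
  rw [LinearMap.range_eq_top.mpr hsurj, finrank_top, Module.finrank_self,
    Module.finrank_finsupp_self] at hrank
  rw [zeroSum, ← hrank, add_comm]

lemma finrank_lt_card_of_injective_zeroSum {α V : Type} [Fintype α]
    [AddCommGroup V] [Module F V] [Nontrivial V] (j : V →ₗ[F] α →₀ F)
    (hj : Function.Injective j) (hmem : ∀ x, j x ∈ zeroSum F α) :
    Module.finrank F V < Fintype.card α := by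
  have : FiniteDimensional F V := .of_injective j hj
  obtain ⟨x, hx⟩ := exists_ne (0 : V)
  obtain ⟨a, -⟩ := Finsupp.support_nonempty_iff.mpr ((map_ne_zero_iff j hj).mpr hx)
  have : Nonempty α := ⟨a⟩
  have hle : Module.finrank F V ≤ Module.finrank F (zeroSum F α) :=
    LinearMap.finrank_le_finrank_of_injective (f := j.codRestrict _ hmem)
      fun x y hxy => hj (congrArg Subtype.val hxy)
  have := finrank_zeroSum (F := F) α
  have := Module.finrank_pos (R := F) (M := V)
  omega

end ZeroSum

section Levels

variable {X : ℕ → Type}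

def descEquiv {n : ℕ} (v : Vert X n) : Desc X v ≃ X n where
  toFun w := w.1 (Fin.last n)
  invFun x := ⟨Fin.snoc v x, funext fun i =>
    Fin.snoc_castSucc (α := fun i : Fin (n + 1) => X i.val) x v i⟩
  left_inv w := by
    apply Subtype.ext
    funext i
    show (Fin.snoc (α := fun i : Fin (n + 1) => X i.val) v (w.1 (Fin.last n))) i = w.1 i
    rcases Fin.eq_castSucc_or_eq_last i with ⟨j, rfl⟩ | rfl
    · rw [Fin.snoc_castSucc]
      exact (congrFun w.2 j).symm
    · rw [Fin.snoc_last]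
  right_inv x := Fin.snoc_last (α := fun i : Fin (n + 1) => X i.val) x v

variable [∀ i, Fintype (X i)]

noncomputable instance {n : ℕ} (v : Vert X n) : Fintype (Desc X v) :=
  Fintype.ofEquiv _ (descEquiv v).symm

lemma card_vert (n : ℕ) :
    Fintype.card (Vert X n) = ∏ i ∈ Finset.range n, Fintype.card (X i) := by
  rw [Fintype.card_pi, Fin.prod_univ_eq_prod_range (fun i => Fintype.card (X i)) n]

lemma card_vert_succ (n : ℕ) :
    Fintype.card (Vert X (n + 1)) = Fintype.card (Vert X n) * Fintype.card (X n) := by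
  rw [card_vert, card_vert, Finset.prod_range_succ]

lemma card_vert_le_of_le {k m : ℕ} (hkm : k ≤ m) (w : Vert X m) :
    Fintype.card (Vert X k) ≤ Fintype.card (Vert X m) := by
  rw [card_vert, card_vert]
  refine Finset.prod_le_prod_of_subset_of_one_le' (Finset.range_subset_range.mpr hkm) ?_
  intro i hi _
  exact Fintype.card_pos_iff.mpr ⟨w ⟨i, Finset.mem_range.mp hi⟩⟩

end Levels

section Occurrence

variable {X : ℕ → Type} {G : Type} [Group G] {F : Type} [Field F] [∀ i, Fintype (X i)]
  {A : TreeAction X G} {n : ℕ} {v : Vert X n}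
  {V : Type} [AddCommGroup V] [Module F V] {π : Representation F (stab A v) V}

lemma OccursInZero.finiteDimensional (h : OccursInZero A F π) : FiniteDimensional F V :=
  let ⟨j, hj, _⟩ := h
  .of_injective j hj

lemma OccursInZero.finrank_lt_card [Nontrivial V] (h : OccursInZero A F π) :
    Module.finrank F V < Fintype.card (X n) := by
  obtain ⟨j, hj, -, hmem⟩ := h
  simpa only [Fintype.card_congr (descEquiv v)] using
    finrank_lt_card_of_injective_zeroSum j hj hmem

end Occurrence

section Induced

variable {X : ℕ → Type} {G : Type} [Group G] {F : Type} [Field F] (A : TreeAction X G) {n : ℕ} (v : Vert X n)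
  {V : Type} [AddCommGroup V] [Module F V] (π : Representation F (stab A v) V)

noncomputable def indCarrierEquivPi (hst : SphTrans A) :
    IndCarrier (stab A v) π ≃ₗ[F] (Vert X n → V) := by
  choose c hc using fun u => hst n v u
  have hmem : ∀ x : G, x * c (A.ρ n x⁻¹ v) ∈ stab A v := by
    intro x
    show A.ρ n (x * c (A.ρ n x⁻¹ v)) v = v
    rw [map_mul, Equiv.Perm.mul_apply, hc, map_inv, Equiv.Perm.inv_def, Equiv.apply_symm_apply]
  refine
    { toFun := fun f u => f.1 (c u)⁻¹
      map_add' := fun f g => rfl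
      map_smul' := fun r f => rfl
      invFun := fun h => ⟨fun x => π ⟨x * c (A.ρ n x⁻¹ v), hmem x⟩ (h (A.ρ n x⁻¹ v)), ?_⟩
      left_inv := ?_
      right_inv := ?_ }
  · intro s x
    have hs : A.ρ n ((s : G) * x)⁻¹ v = A.ρ n x⁻¹ v := by
      rw [mul_inv_rev, map_mul, Equiv.Perm.mul_apply, (stab A v).inv_mem s.2]
    simp only [hs]
    rw [← Module.End.mul_apply, ← map_mul]
    congr 2
    exact Subtype.ext (mul_assoc _ _ _)
  · intro f
    apply Subtype.ext
    funext x
    have hf := f.2 ⟨x * c (A.ρ n x⁻¹ v), hmem x⟩ (c (A.ρ n x⁻¹ v))⁻¹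
    rw [mul_inv_cancel_right] at hf
    exact hf.symm
  · intro h
    funext u
    have hu : A.ρ n (c u)⁻¹⁻¹ v = u := by rw [inv_inv, hc]
    simp only [hu]
    rw [show (⟨(c u)⁻¹ * c u, _⟩ : stab A v) = 1 from Subtype.ext (inv_mul_cancel _), map_one]
    rfl

lemma finrank_indCarrier [∀ i, Fintype (X i)] [FiniteDimensional F V] (hst : SphTrans A) :
    Module.finrank F (IndCarrier (stab A v) π) =
      Fintype.card (Vert X n) * Module.finrank F V := by
  rw [(indCarrierEquivPi A v π hst).finrank_eq, Module.finrank_pi_fintype, Finset.sum_const,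
    Finset.card_univ, smul_eq_mul]

end Induced

theorem stmt_11_general {X : ℕ → Type} [∀ i, Fintype (X i)] {G : Type} [Group G]
    (A : TreeAction X G) (F : Type) [Field F]
    (h2 : LocTwoTrans A) {n m : ℕ} (hnm : n < m) (v : Vert X n) (w : Vert X m)
    (Vπ Vσ : Type) [AddCommGroup Vπ] [Module F Vπ] [AddCommGroup Vσ] [Module F Vσ]
    (π : Representation F (stab A v) Vπ) (σ : Representation F (stab A w) Vσ)
    (hπirr : π.IsIrred) (hπocc : OccursInZero A F π)
    (hσirr : σ.IsIrred) (hσocc : OccursInZero A F σ) :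
    ¬ ∃ e : IndCarrier (stab A v) π ≃ₗ[F] IndCarrier (stab A w) σ,
        ∀ (g : G) (x : IndCarrier (stab A v) π),
          e (IndRep (stab A v) π g x) = IndRep (stab A w) σ g (e x) := by
  rintro ⟨e, -⟩
  have : Nontrivial Vπ := hπirr.1
  have : Nontrivial Vσ := hσirr.1
  have := hπocc.finiteDimensional
  have := hσocc.finiteDimensional
  have hdim := e.finrank_eq
  rw [finrank_indCarrier A v π h2.1, finrank_indCarrier A w σ h2.1] at hdim
  have hLn : 0 < Fintype.card (Vert X n) := Fintype.card_pos_iff.mpr ⟨v⟩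
  refine hdim.not_lt ?_
  calc Fintype.card (Vert X n) * Module.finrank F Vπ
      < Fintype.card (Vert X n) * Fintype.card (X n) :=
        Nat.mul_lt_mul_of_pos_left hπocc.finrank_lt_card hLn
    _ = Fintype.card (Vert X (n + 1)) := (card_vert_succ n).symm
    _ ≤ Fintype.card (Vert X m) := card_vert_le_of_le hnm w
    _ ≤ Fintype.card (Vert X m) * Module.finrank F Vσ :=
        Nat.le_mul_of_pos_right _ Module.finrank_pos

/-- For vertices `v`, `w` in different levels `n < m` and nontrivial irreducible
constituents `π` of `F[D(v)]⁰` and `σ` of `F[D(w)]⁰`, the induced representations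
`Ind_{St(v)}^G π` and `Ind_{St(w)}^G σ` are not isomorphic. -/
theorem stmt_11 {X : ℕ → Type} [∀ i, Fintype (X i)] {G : Type} [Group G]
    (A : TreeAction X G) (F : Type) [Field F]
    (hchar : ∀ k : ℕ, ¬ (ringChar F ∣ Nat.card (A.ρ k).range))
    (h2 : LocTwoTrans A) {n m : ℕ} (hnm : n < m) (v : Vert X n) (w : Vert X m)
    (Vπ Vσ : Type) [AddCommGroup Vπ] [Module F Vπ] [AddCommGroup Vσ] [Module F Vσ]
    (π : Representation F (stab A v) Vπ) (σ : Representation F (stab A w) Vσ)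
    (hπirr : π.IsIrred) (hπnt : ¬ π.IsTriv) (hπocc : OccursInZero A F π)
    (hσirr : σ.IsIrred) (hσnt : ¬ σ.IsTriv) (hσocc : OccursInZero A F σ) :
    ¬ ∃ e : IndCarrier (stab A v) π ≃ₗ[F] IndCarrier (stab A w) σ,
        ∀ (g : G) (x : IndCarrier (stab A v) π),
          e (IndRep (stab A v) π g x) = IndRep (stab A w) σ g (e x) :=
  stmt_11_general A F h2 hnm v w Vπ Vσ π σ hπirr hπocc hσirr hσocc
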